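/- Assume in addition to the setting that: Σ_{j=1}^m w_{ij} = 1 for every i, Σ_{i=1}^m w_{ij} = 1 for every j, ‖(W − (1/m)𝟏𝟏ᵀ)v‖ ≤ ρ‖v‖ for every v ∈ ℝ^m with ρ ∈ (0,1), and the spectral norm of W − I is at most 2. Let δ, δ' ≥ 0, let X = (x_i), X' = (x'_i) be tuples in (ℝ^{n₁})^m, Λ = (λ_i), Λ' = (λ'_i) and Y = (y_i), Y' = (y'_i) tuples in (ℝ^{n₂})^m, and V = (v_i), V' = (v'_i) tuples in (ℝ^{n₁})^m with v'_i = Σ_{j=1}^m w_{ij} v_j + ∇_x f_i(x'_i, y'_i) − ∇_x f_i(x_i, y_i) for each i. Suppose there exist Y⋆ satisfying the first-order maximality condition for Φ(X, Λ, ·) with Σ_i ‖y_i − y⋆_i‖² ≤ mδ²/μ², and Y'⋆ satisfying the first-order maximality condition for Φ(X', Λ', ·) with Σ_i ‖y'_i − y'⋆_i‖² ≤ mδ'²/μ². Then, writing v̄ = (1/m)Σ_i v_i and v̄' = (1/m)Σ_i v'_i and κ = L/μ: Σ_{i=1}^m ‖v'_i − v̄'‖² ≤ ρ Σ_{i=1}^m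 ‖v_i − v̄‖² + (L²/(1−ρ)) [ (1+6κ²) Σ_{i=1}^m ‖x'_i − x_i‖² + 6mκ² Σ_{i=1}^m ‖λ'_i − λ_i‖² + 3mδ'²/μ² + 3mδ²/μ² ]. -/

import Mathlib

/-!
The new consensus error is `(W − 𝟏𝟏ᵀ/m)` applied to the old one plus the centred gradient
increments; Young's inequality with weights `ρ` and `1 − ρ` separates the two, the first
contracts by `ρ²` and centring does not increase the second. The gradient increments are
controlled by `L` times the moves of `x` and `y`, and the move of `y` is split through the two
exact maximizers. Testing the difference of their first-order conditions against `y'⋆ᵢ − y⋆ᵢ`,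
strong concavity and monotonicity of `∂h` give
`μ‖y'⋆ᵢ − y⋆ᵢ‖ ≤ L‖x'ᵢ − xᵢ‖ + (L√m/2)‖((Wᵀ − I)(Λ' − Λ))ᵢ‖`, and `‖Wᵀ − I‖ ≤ 2` bounds the
last term.
-/

open scoped BigOperators RealInnerProductSpace

theorem add_sq_le_div_add_div {ρ : ℝ} (hρ0 : 0 < ρ) (hρ1 : ρ < 1) (a b : ℝ) :
    (a + b) ^ 2 ≤ 1 / ρ * a ^ 2 + 1 / (1 - ρ) * b ^ 2 := by
  have hρ1' : 0 < 1 - ρ := sub_pos.mpr hρ1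
  rw [div_mul_eq_mul_div, div_mul_eq_mul_div, div_add_div _ _ hρ0.ne' hρ1'.ne',
    le_div_iff₀ (by positivity)]
  nlinarith [sq_nonneg ((1 - ρ) * a - ρ * b)]

theorem norm_add_sq_le_div_add_div {E : Type*} [SeminormedAddCommGroup E] {ρ : ℝ}
    (hρ0 : 0 < ρ) (hρ1 : ρ < 1) (a b : E) :
    ‖a + b‖ ^ 2 ≤ 1 / ρ * ‖a‖ ^ 2 + 1 / (1 - ρ) * ‖b‖ ^ 2 :=
  (pow_le_pow_left₀ (norm_nonneg _) (norm_add_le a b) 2).trans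
    (add_sq_le_div_add_div hρ0 hρ1 _ _)

theorem norm_add₃_sq_le {E : Type*} [SeminormedAddCommGroup E] (a b c : E) :
    ‖a + b + c‖ ^ 2 ≤ 3 * (‖a‖ ^ 2 + ‖b‖ ^ 2 + ‖c‖ ^ 2) := by
  have := pow_le_pow_left₀ (norm_nonneg _) (norm_add₃_le (a := a) (b := b) (c := c)) 2
  nlinarith [sq_nonneg (‖a‖ - ‖b‖), sq_nonneg (‖a‖ - ‖c‖), sq_nonneg (‖b‖ - ‖c‖)]

theorem sum_norm_sub_sq_le_three_mul {ι E : Type*} [Fintype ι] [SeminormedAddCommGroup E]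
    (a b c d : ι → E) :
    ∑ i, ‖a i - d i‖ ^ 2
      ≤ 3 * ∑ i, ‖a i - b i‖ ^ 2 + 3 * ∑ i, ‖b i - c i‖ ^ 2 + 3 * ∑ i, ‖c i - d i‖ ^ 2 := by
  simp only [Finset.mul_sum, ← Finset.sum_add_distrib]
  refine Finset.sum_le_sum fun i _ => ?_
  have := norm_add₃_sq_le (a i - b i) (b i - c i) (c i - d i)
  rw [sub_add_sub_cancel, sub_add_sub_cancel] at this
  linarith

section InnerProductSpace

variable {F : Type*} [NormedAddCommGroup F] [InnerProductSpace ℝ F]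

theorem mul_norm_le_of_mul_norm_sq_le_inner {μ : ℝ} {a b : F} (h : μ * ‖a‖ ^ 2 ≤ ⟪a, b⟫) :
    μ * ‖a‖ ≤ ‖b‖ := by
  rcases (norm_nonneg a).eq_or_lt with ha | ha
  · rw [← ha, mul_zero]; exact norm_nonneg b
  · refine le_of_mul_le_mul_right ?_ ha
    calc μ * ‖a‖ * ‖a‖ = μ * ‖a‖ ^ 2 := by ring
      _ ≤ ⟪a, b⟫ := h
      _ ≤ ‖b‖ * ‖a‖ := (real_inner_le_norm a b).trans_eq (mul_comm _ _)

theorem inner_sub_sub_nonneg_of_subgradient {h : F → ℝ} {y y' ζ ζ' : F}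
    (hζ : ∀ z, h y + ⟪ζ, z - y⟫ ≤ h z) (hζ' : ∀ z, h y' + ⟪ζ', z - y'⟫ ≤ h z) :
    0 ≤ ⟪y' - y, ζ' - ζ⟫ := by
  have h₁ := hζ y'
  have h₂ := hζ' y
  rw [← neg_sub y' y, inner_neg_right] at h₂
  rw [inner_sub_right, real_inner_comm ζ', real_inner_comm ζ]
  linarith

theorem mul_norm_sub_le_of_subgradient {G : F → F} {h : F → ℝ} {μ : ℝ}
    (hG : ∀ y y', ⟪y - y', G y - G y'⟫ ≤ -μ * ‖y - y'‖ ^ 2) {y y' g ζ ζ' a a' : F}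
    (hζ : ∀ z, h y + ⟪ζ, z - y⟫ ≤ h z) (hζ' : ∀ z, h y' + ⟪ζ', z - y'⟫ ≤ h z)
    (ha : g - ζ = a) (ha' : G y' - ζ' = a') :
    μ * ‖y' - y‖ ≤ ‖G y - g - (a' - a)‖ := by
  subst ha ha'
  refine mul_norm_le_of_mul_norm_sq_le_inner ?_
  have hsplit : G y - g - (G y' - ζ' - (g - ζ)) = -(G y' - G y) + (ζ' - ζ) := by abel
  rw [hsplit, inner_add_right, inner_neg_right]
  linarith [hG y' y, inner_sub_sub_nonneg_of_subgradient hζ hζ']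

theorem sq_mul_sum_norm_sub_sq_le_of_subgradient {ι E : Type*} [Fintype ι]
    [SeminormedAddCommGroup E] {G : ι → E → F → F} {h : F → ℝ} {μ L k : ℝ} (hμ : 0 ≤ μ)
    (hLip : ∀ i x x' y, ‖G i x y - G i x' y‖ ^ 2 ≤ L ^ 2 * ‖x - x'‖ ^ 2)
    (hconc : ∀ i x y y', ⟪y - y', G i x y - G i x y'⟫ ≤ -μ * ‖y - y'‖ ^ 2)
    {x x' : ι → E} {y y' ζ ζ' a a' : ι → F}
    (hζ : ∀ i z, h (y i) + ⟪ζ i, z - y i⟫ ≤ h z) (hζ' : ∀ i z, h (y' i) + ⟪ζ' i, z - y' i⟫ ≤ h z)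
    (ha : ∀ i, G i (x i) (y i) - ζ i = k • a i) (ha' : ∀ i, G i (x' i) (y' i) - ζ' i = k • a' i) :
    μ ^ 2 * ∑ i, ‖y' i - y i‖ ^ 2
      ≤ 2 * L ^ 2 * ∑ i, ‖x' i - x i‖ ^ 2 + 2 * k ^ 2 * ∑ i, ‖a' i - a i‖ ^ 2 := by
  simp only [Finset.mul_sum, ← Finset.sum_add_distrib]
  refine Finset.sum_le_sum fun i _ => ?_
  set g := G i (x' i) (y i) - G i (x i) (y i)
  have hmove : μ * ‖y' i - y i‖ ≤ ‖g‖ + |k| * ‖a' i - a i‖ := by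
    refine (mul_norm_sub_le_of_subgradient (hconc i (x' i)) (hζ i) (hζ' i) (ha i) (ha' i)).trans ?_
    rw [← smul_sub]
    exact (norm_sub_le _ _).trans_eq (by rw [norm_smul, Real.norm_eq_abs])
  calc μ ^ 2 * ‖y' i - y i‖ ^ 2 = (μ * ‖y' i - y i‖) ^ 2 := by ring
    _ ≤ (‖g‖ + |k| * ‖a' i - a i‖) ^ 2 := pow_le_pow_left₀ (by positivity) hmove 2
    _ ≤ 2 * (‖g‖ ^ 2 + (|k| * ‖a' i - a i‖) ^ 2) := add_sq_le
    _ ≤ 2 * L ^ 2 * ‖x' i - x i‖ ^ 2 + 2 * k ^ 2 * ‖a' i - a i‖ ^ 2 := by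
      rw [mul_pow, sq_abs]; linarith [hLip i (x' i) (x i) (y i)]

theorem sum_norm_sum_smul_sq_le [FiniteDimensional ℝ F] {ι : Type*} [Fintype ι]
    {a : ι → ι → ℝ} {C : ℝ} (ha : ∀ v : ι → ℝ, ∑ i, (∑ j, a i j * v j) ^ 2 ≤ C * ∑ j, v j ^ 2)
    (u : ι → F) :
    ∑ i, ‖∑ j, a i j • u j‖ ^ 2 ≤ C * ∑ j, ‖u j‖ ^ 2 := by
  let b := stdOrthonormalBasis ℝ F
  have hcoord : ∀ i t, ⟪b t, ∑ j, a i j • u j⟫ = ∑ j, a i j * ⟪b t, u j⟫ := fun i t => by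
    simp only [inner_sum, inner_smul_right]
  calc ∑ i, ‖∑ j, a i j • u j‖ ^ 2 = ∑ t, ∑ i, (∑ j, a i j * ⟪b t, u j⟫) ^ 2 := by
        simp only [← b.sum_sq_inner_right, hcoord]; exact Finset.sum_comm
    _ ≤ ∑ t, C * ∑ j, ⟪b t, u j⟫ ^ 2 := Finset.sum_le_sum fun t _ => ha _
    _ = C * ∑ j, ‖u j‖ ^ 2 := by
        simp only [← b.sum_sq_inner_right, ← Finset.mul_sum]; rw [Finset.sum_comm]

end InnerProductSpace

theorem sum_sum_smul_eq_sum {ι E : Type*} [Fintype ι] [AddCommGroup E] [Module ℝ E]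
    {w : ι → ι → ℝ} (hcol : ∀ j, ∑ i, w i j = 1) (v : ι → E) :
    ∑ i, ∑ j, w i j • v j = ∑ j, v j := by
  rw [Finset.sum_comm]
  simp only [← Finset.sum_smul, hcol, one_smul]

section Consensus

variable {m : ℕ} {E : Type*} [NormedAddCommGroup E] [InnerProductSpace ℝ E]

theorem sum_norm_sub_average_sq_le (d : Fin m → E) :
    ∑ i, ‖d i - (1 / (m : ℝ)) • ∑ k, d k‖ ^ 2 ≤ ∑ i, ‖d i‖ ^ 2 := by
  set D := ∑ k, d k
  have hexpand : ∑ i, ‖d i - (1 / (m : ℝ)) • D‖ ^ 2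
      = ∑ i, ‖d i‖ ^ 2 - 2 * ⟪D, (1 / (m : ℝ)) • D⟫ + m * ‖(1 / (m : ℝ)) • D‖ ^ 2 := by
    simp only [norm_sub_sq_real, Finset.sum_add_distrib, Finset.sum_sub_distrib,
      ← Finset.mul_sum, ← sum_inner]
    simp [D]
  have hmean : (m : ℝ) * ‖(1 / (m : ℝ)) • D‖ ^ 2 = 1 / m * ‖D‖ ^ 2 := by
    rcases eq_or_ne (m : ℝ) 0 with hm | hm
    · simp [hm]
    · rw [norm_smul, mul_pow, Real.norm_eq_abs, sq_abs]
      field_simp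
  rw [hexpand, hmean, real_inner_smul_right, real_inner_self_eq_norm_sq]
  have : 0 ≤ 1 / (m : ℝ) * ‖D‖ ^ 2 := by positivity
  linarith

theorem sum_smul_sub_average_eq {w : Fin m → Fin m → ℝ} {i : Fin m} (hrow : ∑ j, w i j = 1)
    (v : Fin m → E) :
    ∑ j, (w i j - 1 / (m : ℝ)) • (v j - (1 / (m : ℝ)) • ∑ k, v k)
      = ∑ j, w i j • v j - (1 / (m : ℝ)) • ∑ k, v k := by
  have hm : (m : ℝ) ≠ 0 := Nat.cast_ne_zero.mpr (Fin.pos i).ne'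
  have hzero : ∑ j, (w i j - 1 / (m : ℝ)) = 0 := by
    simp [Finset.sum_sub_distrib, hrow, hm]
  rw [Finset.sum_congr rfl fun j _ => smul_sub _ _ _, Finset.sum_sub_distrib, ← Finset.sum_smul,
    hzero, zero_smul, sub_zero]
  simp only [sub_smul, Finset.sum_sub_distrib, ← Finset.smul_sum]

theorem sum_norm_mix_add_sub_average_sq_le [FiniteDimensional ℝ E] {w : Fin m → Fin m → ℝ}
    {ρ : ℝ} (hρ0 : 0 < ρ) (hρ1 : ρ < 1) (hrow : ∀ i, ∑ j, w i j = 1)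
    (hcol : ∀ j, ∑ i, w i j = 1)
    (hcontr : ∀ v : Fin m → ℝ,
      ∑ i, (∑ j, (w i j - 1 / (m : ℝ)) * v j) ^ 2 ≤ ρ ^ 2 * ∑ j, v j ^ 2)
    (v d : Fin m → E) :
    ∑ i, ‖(∑ j, w i j • v j + d i) - (1 / (m : ℝ)) • ∑ k, (∑ j, w k j • v j + d k)‖ ^ 2
      ≤ ρ * ∑ i, ‖v i - (1 / (m : ℝ)) • ∑ k, v k‖ ^ 2 + 1 / (1 - ρ) * ∑ i, ‖d i‖ ^ 2 := by
  set v₀ := fun j => v j - (1 / (m : ℝ)) • ∑ k, v k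
  have hdecomp : ∀ i, (∑ j, w i j • v j + d i) - (1 / (m : ℝ)) • ∑ k, (∑ j, w k j • v j + d k)
      = ∑ j, (w i j - 1 / (m : ℝ)) • v₀ j + (d i - (1 / (m : ℝ)) • ∑ k, d k) := fun i => by
    rw [sum_smul_sub_average_eq (hrow i), Finset.sum_add_distrib, sum_sum_smul_eq_sum hcol,
      smul_add]
    abel
  calc _ = ∑ i, ‖∑ j, (w i j - 1 / (m : ℝ)) • v₀ j + (d i - (1 / (m : ℝ)) • ∑ k, d k)‖ ^ 2 := by
        simp only [hdecomp]
    _ ≤ ∑ i, (1 / ρ * ‖∑ j, (w i j - 1 / (m : ℝ)) • v₀ j‖ ^ 2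
          + 1 / (1 - ρ) * ‖d i - (1 / (m : ℝ)) • ∑ k, d k‖ ^ 2) :=
        Finset.sum_le_sum fun i _ => norm_add_sq_le_div_add_div hρ0 hρ1 _ _
    _ = 1 / ρ * ∑ i, ‖∑ j, (w i j - 1 / (m : ℝ)) • v₀ j‖ ^ 2
          + 1 / (1 - ρ) * ∑ i, ‖d i - (1 / (m : ℝ)) • ∑ k, d k‖ ^ 2 := by
        rw [Finset.sum_add_distrib, ← Finset.mul_sum, ← Finset.mul_sum]
    _ ≤ 1 / ρ * (ρ ^ 2 * ∑ j, ‖v₀ j‖ ^ 2) + 1 / (1 - ρ) * ∑ i, ‖d i‖ ^ 2 := by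
        gcongr 1 / ρ * ?_ + 1 / (1 - ρ) * ?_
        · exact sum_norm_sum_smul_sq_le hcontr v₀
        · exact sum_norm_sub_average_sq_le d
    _ = ρ * ∑ i, ‖v₀ i‖ ^ 2 + 1 / (1 - ρ) * ∑ i, ‖d i‖ ^ 2 := by
        field_simp

end Consensus

theorem sum_norm_sub_sq_le_of_stationary {m : ℕ} {E F : Type*} [SeminormedAddCommGroup E]
    [NormedAddCommGroup F] [InnerProductSpace ℝ F] [FiniteDimensional ℝ F]
    {G : Fin m → E → F → F} {h : F → ℝ} {w : Fin m → Fin m → ℝ} {L μ : ℝ} (hμ : 0 < μ)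
    (hLip : ∀ i x x' y, ‖G i x y - G i x' y‖ ^ 2 ≤ L ^ 2 * ‖x - x'‖ ^ 2)
    (hconc : ∀ i x y y', ⟪y - y', G i x y - G i x y'⟫ ≤ -μ * ‖y - y'‖ ^ 2)
    (hWIt : ∀ v : Fin m → ℝ,
      ∑ i, (∑ j, (w j i - if i = j then 1 else 0) * v j) ^ 2 ≤ 4 * ∑ i, v i ^ 2)
    {x x' : Fin m → E} {lam lam' y y' ζ ζ' : Fin m → F}
    (hζ : ∀ i z, h (y i) + ⟪ζ i, z - y i⟫ ≤ h z) (hζ' : ∀ i z, h (y' i) + ⟪ζ' i, z - y' i⟫ ≤ h z)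
    (hstat : ∀ i, (1 / (m : ℝ)) • (G i (x i) (y i) - ζ i)
      = (L / (2 * Real.sqrt m)) • ∑ j, (w j i - if i = j then 1 else 0) • lam j)
    (hstat' : ∀ i, (1 / (m : ℝ)) • (G i (x' i) (y' i) - ζ' i)
      = (L / (2 * Real.sqrt m)) • ∑ j, (w j i - if i = j then 1 else 0) • lam' j) :
    ∑ i, ‖y' i - y i‖ ^ 2
      ≤ 2 * (L / μ) ^ 2 * ∑ i, ‖x' i - x i‖ ^ 2
        + 2 * m * (L / μ) ^ 2 * ∑ i, ‖lam' i - lam i‖ ^ 2 := by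
  set T : (Fin m → F) → Fin m → F := fun l i => ∑ j, (w j i - if i = j then 1 else 0) • l j
  set k := (m : ℝ) * (L / (2 * Real.sqrt m))
  have hrescale : ∀ {i : Fin m} {u : F} {l},
      (1 / (m : ℝ)) • u = (L / (2 * Real.sqrt m)) • T l i → u = k • T l i := fun {i} _ _ e => by
    rwa [one_div, inv_smul_eq_iff₀ (Nat.cast_ne_zero.mpr (Fin.pos i).ne'), smul_smul] at e
  have hdual : ∑ i, ‖T lam' i - T lam i‖ ^ 2 ≤ 4 * ∑ i, ‖lam' i - lam i‖ ^ 2 := by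
    simpa only [T, ← Finset.sum_sub_distrib, ← smul_sub] using
      sum_norm_sum_smul_sq_le hWIt (fun j => lam' j - lam j)
  have hk : 8 * k ^ 2 = 2 * m * L ^ 2 := by
    rcases eq_or_ne (m : ℝ) 0 with hm | hm
    · simp [k, hm]
    · rw [mul_pow, div_pow, mul_pow, Real.sq_sqrt m.cast_nonneg]
      field_simp
      ring
  refine le_of_mul_le_mul_left ?_ (by positivity : 0 < μ ^ 2)
  calc μ ^ 2 * ∑ i, ‖y' i - y i‖ ^ 2
      ≤ 2 * L ^ 2 * ∑ i, ‖x' i - x i‖ ^ 2 + 2 * k ^ 2 * ∑ i, ‖T lam' i - T lam i‖ ^ 2 :=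
        sq_mul_sum_norm_sub_sq_le_of_subgradient hμ.le hLip hconc hζ hζ'
          (fun i => hrescale (hstat i)) (fun i => hrescale (hstat' i))
    _ ≤ 2 * L ^ 2 * ∑ i, ‖x' i - x i‖ ^ 2 + 2 * m * L ^ 2 * ∑ i, ‖lam' i - lam i‖ ^ 2 := by
        linear_combination 2 * k ^ 2 * hdual + (∑ i, ‖lam' i - lam i‖ ^ 2) * hk
    _ = _ := by field_simp

theorem dgdmax_tracking_consensus_contraction_approx_general
    {m n₁ n₂ : ℕ}
    (L μ ρ δ δ' : ℝ) (hμ : 0 < μ) (hρ0 : 0 < ρ) (hρ1 : ρ < 1)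
    (Gx : Fin m → EuclideanSpace ℝ (Fin n₁) → EuclideanSpace ℝ (Fin n₂) →
      EuclideanSpace ℝ (Fin n₁))
    (Gy : Fin m → EuclideanSpace ℝ (Fin n₁) → EuclideanSpace ℝ (Fin n₂) →
      EuclideanSpace ℝ (Fin n₂))
    (hLip : ∀ i x y x' y',
      ‖Gx i x y - Gx i x' y'‖ ^ 2 + ‖Gy i x y - Gy i x' y'‖ ^ 2
        ≤ L ^ 2 * (‖x - x'‖ ^ 2 + ‖y - y'‖ ^ 2))
    (hconc : ∀ i x y y', ⟪y - y', Gy i x y - Gy i x y'⟫ ≤ -μ * ‖y - y'‖ ^ 2)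
    (h : EuclideanSpace ℝ (Fin n₂) → ℝ)
    (w : Fin m → Fin m → ℝ)
    (hrow : ∀ i, ∑ j, w i j = 1) (hcol : ∀ j, ∑ i, w i j = 1)
    (hcontr : ∀ v : Fin m → ℝ,
      ∑ i, (∑ j, (w i j - 1 / (m : ℝ)) * v j) ^ 2 ≤ ρ ^ 2 * ∑ j, (v j) ^ 2)
    -- `‖W − I‖₂ ≤ 2` (squared form), for `W − I` and its transpose
    (hWIt : ∀ v : Fin m → ℝ,
      ∑ i, (∑ j, (w j i - if i = j then 1 else 0) * v j) ^ 2 ≤ 4 * ∑ i, (v i) ^ 2)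
    (x x' v v' : Fin m → EuclideanSpace ℝ (Fin n₁))
    (lam lam' y y' : Fin m → EuclideanSpace ℝ (Fin n₂))
    (hupd : ∀ i, v' i = (∑ j, w i j • v j) + Gx i (x' i) (y' i) - Gx i (x i) (y i))
    -- `y` is within `√m δ/μ` of an exact maximizer `Y⋆` of `Φ(X, Λ, ·)`
    (hY : ∃ ystar : Fin m → EuclideanSpace ℝ (Fin n₂),
      (∃ ζ : Fin m → EuclideanSpace ℝ (Fin n₂),
        (∀ i, ∀ z, h (ystar i) + ⟪ζ i, z - ystar i⟫ ≤ h z) ∧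
        (∀ i, (1 / (m : ℝ)) • (Gy i (x i) (ystar i) - ζ i)
            = (L / (2 * Real.sqrt (m : ℝ))) •
                ∑ j, (w j i - if i = j then 1 else 0) • lam j)) ∧
      ∑ i, ‖y i - ystar i‖ ^ 2 ≤ (m : ℝ) * δ ^ 2 / μ ^ 2)
    -- `y'` is within `√m δ'/μ` of an exact maximizer `Y'⋆` of `Φ(X', Λ', ·)`
    (hY' : ∃ ystar : Fin m → EuclideanSpace ℝ (Fin n₂),
      (∃ ζ : Fin m → EuclideanSpace ℝ (Fin n₂),
        (∀ i, ∀ z, h (ystar i) + ⟪ζ i, z - ystar i⟫ ≤ h z) ∧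
        (∀ i, (1 / (m : ℝ)) • (Gy i (x' i) (ystar i) - ζ i)
            = (L / (2 * Real.sqrt (m : ℝ))) •
                ∑ j, (w j i - if i = j then 1 else 0) • lam' j)) ∧
      ∑ i, ‖y' i - ystar i‖ ^ 2 ≤ (m : ℝ) * δ' ^ 2 / μ ^ 2) :
    ∑ i, ‖v' i - (1 / (m : ℝ)) • ∑ k, v' k‖ ^ 2
      ≤ ρ * ∑ i, ‖v i - (1 / (m : ℝ)) • ∑ k, v k‖ ^ 2
        + (L ^ 2 / (1 - ρ)) *
            ((1 + 6 * (L / μ) ^ 2) * ∑ i, ‖x' i - x i‖ ^ 2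
              + 6 * (m : ℝ) * (L / μ) ^ 2 * ∑ i, ‖lam' i - lam i‖ ^ 2
              + 3 * (m : ℝ) * δ' ^ 2 / μ ^ 2 + 3 * (m : ℝ) * δ ^ 2 / μ ^ 2) := by
  obtain ⟨ys, ⟨ζ, hζ, hstat⟩, hclose⟩ := hY
  obtain ⟨ys', ⟨ζ', hζ', hstat'⟩, hclose'⟩ := hY'
  have hGy_lip : ∀ i a a' b, ‖Gy i a b - Gy i a' b‖ ^ 2 ≤ L ^ 2 * ‖a - a'‖ ^ 2 := fun i a a' b => by
    have := hLip i a b a' b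
    rw [sub_self, norm_zero] at this
    nlinarith [sq_nonneg ‖Gx i a b - Gx i a' b‖]
  have hmax := sum_norm_sub_sq_le_of_stationary hμ hGy_lip hconc hWIt hζ hζ' hstat hstat'
  have hclose_rev : ∑ i, ‖ys i - y i‖ ^ 2 ≤ m * δ ^ 2 / μ ^ 2 := by
    simpa only [norm_sub_rev] using hclose
  have hmove := sum_norm_sub_sq_le_three_mul y' ys' ys y
  have hgrad : ∑ i, ‖Gx i (x' i) (y' i) - Gx i (x i) (y i)‖ ^ 2
      ≤ L ^ 2 * (∑ i, ‖x' i - x i‖ ^ 2 + ∑ i, ‖y' i - y i‖ ^ 2) := by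
    rw [← Finset.sum_add_distrib, Finset.mul_sum]
    refine Finset.sum_le_sum fun i _ => ?_
    linarith [hLip i (x' i) (y' i) (x i) (y i), sq_nonneg ‖Gy i (x' i) (y' i) - Gy i (x i) (y i)‖]
  obtain rfl : v' = fun i => ∑ j, w i j • v j + (Gx i (x' i) (y' i) - Gx i (x i) (y i)) :=
    funext fun i => by rw [hupd, add_sub_assoc]
  refine (sum_norm_mix_add_sub_average_sq_le hρ0 hρ1 hrow hcol hcontr v _).trans ?_
  rw [div_eq_mul_one_div (L ^ 2), mul_comm (L ^ 2), mul_assoc]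
  gcongr
  refine hgrad.trans (mul_le_mul_of_nonneg_left ?_ (sq_nonneg L))
  linear_combination hmove + 3 * hmax + 3 * hclose' + 3 * hclose_rev

/-- One-step consensus-error contraction for the gradient-tracking
variables, with the `Y`-moves bounded through approximate maximizers: if `Y` is within
`√m δ/μ` (in Frobenius norm) of a point satisfying the first-order maximality condition
for `Φ(X, Λ, ·)` and similarly for `Y'`, then
`‖V'_⊥‖² ≤ ρ‖V_⊥‖² + (L²/(1−ρ))[(1+6κ²)‖X'−X‖² + 6mκ²‖Λ'−Λ‖² + 3mδ'²/μ² + 3mδ²/μ²]`. -/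
theorem dgdmax_tracking_consensus_contraction_approx
    {m n₁ n₂ : ℕ} (hm : 0 < m) (hn₁ : 0 < n₁) (hn₂ : 0 < n₂)
    (L μ ρ δ δ' : ℝ) (hμ : 0 < μ) (hLμ : μ ≤ L) (hρ0 : 0 < ρ) (hρ1 : ρ < 1)
    (hδ : 0 ≤ δ) (hδ' : 0 ≤ δ')
    (f : Fin m → EuclideanSpace ℝ (Fin n₁) → EuclideanSpace ℝ (Fin n₂) → ℝ)
    (Gx : Fin m → EuclideanSpace ℝ (Fin n₁) → EuclideanSpace ℝ (Fin n₂) →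
      EuclideanSpace ℝ (Fin n₁))
    (Gy : Fin m → EuclideanSpace ℝ (Fin n₁) → EuclideanSpace ℝ (Fin n₂) →
      EuclideanSpace ℝ (Fin n₂))
    (hGx : ∀ i x y, HasGradientAt (fun x' => f i x' y) (Gx i x y) x)
    (hGy : ∀ i x y, HasGradientAt (fun y' => f i x y') (Gy i x y) y)
    (hLip : ∀ i x y x' y',
      ‖Gx i x y - Gx i x' y'‖ ^ 2 + ‖Gy i x y - Gy i x' y'‖ ^ 2
        ≤ L ^ 2 * (‖x - x'‖ ^ 2 + ‖y - y'‖ ^ 2))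
    (hconc : ∀ i x y y', ⟪y - y', Gy i x y - Gy i x y'⟫ ≤ -μ * ‖y - y'‖ ^ 2)
    (h : EuclideanSpace ℝ (Fin n₂) → ℝ) (hconv : ConvexOn ℝ Set.univ h)
    (w : Fin m → Fin m → ℝ)
    (hrow : ∀ i, ∑ j, w i j = 1) (hcol : ∀ j, ∑ i, w i j = 1)
    (hcontr : ∀ v : Fin m → ℝ,
      ∑ i, (∑ j, (w i j - 1 / (m : ℝ)) * v j) ^ 2 ≤ ρ ^ 2 * ∑ j, (v j) ^ 2)
    -- `‖W − I‖₂ ≤ 2` (squared form), for `W − I` and its transpose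
    (hWI : ∀ v : Fin m → ℝ,
      ∑ i, (∑ j, (w i j - if i = j then 1 else 0) * v j) ^ 2 ≤ 4 * ∑ i, (v i) ^ 2)
    (hWIt : ∀ v : Fin m → ℝ,
      ∑ i, (∑ j, (w j i - if i = j then 1 else 0) * v j) ^ 2 ≤ 4 * ∑ i, (v i) ^ 2)
    (x x' v v' : Fin m → EuclideanSpace ℝ (Fin n₁))
    (lam lam' y y' : Fin m → EuclideanSpace ℝ (Fin n₂))
    (hupd : ∀ i, v' i = (∑ j, w i j • v j) + Gx i (x' i) (y' i) - Gx i (x i) (y i))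
    -- `y` is within `√m δ/μ` of an exact maximizer `Y⋆` of `Φ(X, Λ, ·)`
    (hY : ∃ ystar : Fin m → EuclideanSpace ℝ (Fin n₂),
      (∃ ζ : Fin m → EuclideanSpace ℝ (Fin n₂),
        (∀ i, ∀ z, h (ystar i) + ⟪ζ i, z - ystar i⟫ ≤ h z) ∧
        (∀ i, (1 / (m : ℝ)) • (Gy i (x i) (ystar i) - ζ i)
            = (L / (2 * Real.sqrt (m : ℝ))) •
                ∑ j, (w j i - if i = j then 1 else 0) • lam j)) ∧
      ∑ i, ‖y i - ystar i‖ ^ 2 ≤ (m : ℝ) * δ ^ 2 / μ ^ 2)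
    -- `y'` is within `√m δ'/μ` of an exact maximizer `Y'⋆` of `Φ(X', Λ', ·)`
    (hY' : ∃ ystar : Fin m → EuclideanSpace ℝ (Fin n₂),
      (∃ ζ : Fin m → EuclideanSpace ℝ (Fin n₂),
        (∀ i, ∀ z, h (ystar i) + ⟪ζ i, z - ystar i⟫ ≤ h z) ∧
        (∀ i, (1 / (m : ℝ)) • (Gy i (x' i) (ystar i) - ζ i)
            = (L / (2 * Real.sqrt (m : ℝ))) •
                ∑ j, (w j i - if i = j then 1 else 0) • lam' j)) ∧
      ∑ i, ‖y' i - ystar i‖ ^ 2 ≤ (m : ℝ) * δ' ^ 2 / μ ^ 2) :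
    ∑ i, ‖v' i - (1 / (m : ℝ)) • ∑ k, v' k‖ ^ 2
      ≤ ρ * ∑ i, ‖v i - (1 / (m : ℝ)) • ∑ k, v k‖ ^ 2
        + (L ^ 2 / (1 - ρ)) *
            ((1 + 6 * (L / μ) ^ 2) * ∑ i, ‖x' i - x i‖ ^ 2
              + 6 * (m : ℝ) * (L / μ) ^ 2 * ∑ i, ‖lam' i - lam i‖ ^ 2
              + 3 * (m : ℝ) * δ' ^ 2 / μ ^ 2 + 3 * (m : ℝ) * δ ^ 2 / μ ^ 2) :=
  dgdmax_tracking_consensus_contraction_approx_general L μ ρ δ δ' hμ hρ0 hρ1 Gx Gy hLip hconc h w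
    hrow hcol hcontr hWIt x x' v v' lam lam' y y' hupd hY hY'
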